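/- arXiv:0905.2914 — 2 statements merged into one kernel-verified Lean document; each statement's English description precedes it below -/
import Mathlib

section
/- Let φ ∈ C²((0,∞); ℝ) and F > 0 with φ''(2F) ≤ 0. Then E_a''(y_F)[u,u] > 0 for all u ∈ 𝒰 ∖ {0} if and only if A_F − ε² μ_ε² φ''(2F) > 0, where μ_ε = 2 sin(πε/2)/ε. -/
open Finset Real

noncomputable section

/-- The index set `{-N+1, ..., N}` of one period. -/
def idx (N : ℕ) : Finset ℤ := Finset.Icc (-(N : ℤ) + 1) (N : ℤ)

/-- The space 𝒰 of 2N-periodic displacements with zero mean. -/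
def uSet (N : ℕ) : Set (ℤ → ℝ) :=
  {u | (∀ ℓ : ℤ, u (ℓ + 2 * (N : ℤ)) = u ℓ) ∧ ∑ ℓ ∈ idx N, u ℓ = 0}

/-- Backward difference `v'_ℓ = ε⁻¹ (v_ℓ - v_{ℓ-1})`, with `ε = 1/N`. -/
def bD (N : ℕ) (v : ℤ → ℝ) (ℓ : ℤ) : ℝ := (N : ℝ) * (v ℓ - v (ℓ - 1))

/-- Centered second difference `v''_ℓ = ε⁻² (v_{ℓ+1} - 2 v_ℓ + v_{ℓ-1})`. -/
def cD2 (N : ℕ) (v : ℤ → ℝ) (ℓ : ℤ) : ℝ := (N : ℝ) ^ 2 * (v (ℓ + 1) - 2 * v ℓ + v (ℓ - 1))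

/-- Weighted ℓ²-norm. -/
def nl2 (N : ℕ) (v : ℤ → ℝ) : ℝ := Real.sqrt ((N : ℝ)⁻¹ * ∑ ℓ ∈ idx N, (v ℓ) ^ 2)

/-- Weighted ℓ¹-norm. -/
def nl1 (N : ℕ) (v : ℤ → ℝ) : ℝ := (N : ℝ)⁻¹ * ∑ ℓ ∈ idx N, |v ℓ|

/-- ℓ∞-norm over one period. -/
def nlinf (N : ℕ) (v : ℤ → ℝ) : ℝ := ⨆ ℓ : {ℓ : ℤ // ℓ ∈ idx N}, |v ℓ.1|

/-- Weighted ℓ²-inner product. -/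
def iprod (N : ℕ) (u v : ℤ → ℝ) : ℝ := (N : ℝ)⁻¹ * ∑ ℓ ∈ idx N, u ℓ * v ℓ

/-- The uniform deformation `(y_F)_ℓ = F ℓ ε`. -/
def yF (N : ℕ) (F : ℝ) : ℤ → ℝ := fun ℓ => F * (ℓ : ℝ) * (N : ℝ)⁻¹

/-- First variation `E'(y)[u]`. -/
def dE (E : (ℤ → ℝ) → ℝ) (y u : ℤ → ℝ) : ℝ := deriv (fun t : ℝ => E (y + t • u)) 0

/-- Second variation `E''(y)[u,v]`. -/
def d2E (E : (ℤ → ℝ) → ℝ) (y u v : ℤ → ℝ) : ℝ :=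
  deriv (fun s : ℝ => deriv (fun t : ℝ => E (y + s • u + t • v)) 0) 0

/-- The atomistic energy. -/
def Ea (N : ℕ) (φ : ℝ → ℝ) (y : ℤ → ℝ) : ℝ :=
  (N : ℝ)⁻¹ * ∑ ℓ ∈ idx N, (φ (bD N y ℓ) + φ (bD N y ℓ + bD N y (ℓ + 1)))

/-- The local QC (continuum) energy. -/
def Eqcl (N : ℕ) (φ : ℝ → ℝ) (y : ℤ → ℝ) : ℝ :=
  (N : ℝ)⁻¹ * ∑ ℓ ∈ idx N, (φ (bD N y ℓ) + φ (2 * bD N y ℓ))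

/-- The QNL atomistic region `{-K-1, ..., K+1}`. -/
def aQnl (K : ℕ) : Finset ℤ := Finset.Icc (-(K : ℤ) - 1) ((K : ℤ) + 1)

/-- The quasi-nonlocal QC energy. -/
def Eqnl (N K : ℕ) (φ : ℝ → ℝ) (y : ℤ → ℝ) : ℝ :=
  (N : ℝ)⁻¹ * ((∑ ℓ ∈ idx N, φ (bD N y ℓ))
    + (∑ ℓ ∈ aQnl K, φ (bD N y ℓ + bD N y (ℓ + 1)))
    + ∑ ℓ ∈ idx N \ aQnl K, (φ (2 * bD N y ℓ) + φ (2 * bD N y (ℓ + 1))) / 2)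

/-- The QCE atomistic region `{-K, ..., K}`. -/
def aQce (K : ℕ) : Finset ℤ := Finset.Icc (-(K : ℤ)) (K : ℤ)

/-- Atomistic energy contribution of atom ℓ. -/
def eAtom (N : ℕ) (φ : ℝ → ℝ) (y : ℤ → ℝ) (ℓ : ℤ) : ℝ :=
  (φ (bD N y ℓ) + φ (bD N y (ℓ + 1)) + φ (bD N y (ℓ - 1) + bD N y ℓ)
    + φ (bD N y (ℓ + 1) + bD N y (ℓ + 2))) / 2

/-- Continuum energy contribution of atom ℓ. -/
def eCont (N : ℕ) (φ : ℝ → ℝ) (y : ℤ → ℝ) (ℓ : ℤ) : ℝ :=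
  (φ (bD N y ℓ) + φ (bD N y (ℓ + 1)) + φ (2 * bD N y ℓ) + φ (2 * bD N y (ℓ + 1))) / 2

/-- The energy-based QC energy. -/
def Eqce (N K : ℕ) (φ : ℝ → ℝ) (y : ℤ → ℝ) : ℝ :=
  (N : ℝ)⁻¹ * ((∑ ℓ ∈ idx N \ aQce K, eCont N φ y ℓ) + ∑ ℓ ∈ aQce K, eAtom N φ y ℓ)

/-- The prescribed backward difference `ĝ'` of the ghost-force corrector. -/
def ghatD (K : ℕ) (ℓ : ℤ) : ℝ :=
  if ℓ = -(K : ℤ) - 1 ∨ ℓ = (K : ℤ) + 2 then -(1 / 2)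
  else if ℓ = -(K : ℤ) + 1 ∨ ℓ = (K : ℤ) then 1 / 2 else 0

/-- `μ_ε = 2 sin(π ε / 2) / ε` with `ε = 1/N`. -/
def muEps (N : ℕ) : ℝ := 2 * Real.sin (Real.pi * (N : ℝ)⁻¹ / 2) / (N : ℝ)⁻¹

/-- The `𝒰^{-1,∞}`-norm of a functional `T` on 𝒰. -/
def dualNorm (N : ℕ) (T : (ℤ → ℝ) → ℝ) : ℝ :=
  sSup {r : ℝ | ∃ v ∈ uSet N, nl1 N (bD N v) = 1 ∧ r = T v}


/-!
At `y_F` the second variation is the quadratic form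
`ε ∑ φ''(F) (a_ℓ)² + φ''(2F) (a_ℓ + a_{ℓ+1})² = ε (A_F ∑ a_ℓ² - φ''(2F) ∑ (a_{ℓ+1} - a_ℓ)²)`
in the `2N`-periodic, mean-zero sequence `a = u'`. As `φ''(2F) ≤ 0`, its sign is decided by the
sharp discrete Wirtinger inequality `∑ (a_{ℓ+1} - a_ℓ)² ≥ 4 sin²(π/2N) ∑ a_ℓ²` on `ℤ/2N`, where
`4 sin²(π/2N) = ε² μ_ε²`. The inequality follows from Parseval's identity for the discrete Fourier
transform, since the shift multiplies the `k`-th Fourier coefficient by `e^{2πik/2N}`; it is an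
equality when `a` is the difference sequence of the sampled cosine `u_ℓ = cos(πℓ/N)`, which, like
`u`, is an eigenvector of the discrete Laplacian.
-/

theorem sin_pi_div_le_sin_pi_mul_div {M k : ℕ} (hk : 0 < k) (hkM : k < M) :
    sin (π / M) ≤ sin (π * k / M) := by
  have hM : (1 : ℝ) ≤ M := by exact_mod_cast hk.trans hkM
  have hk1 : (1 : ℝ) ≤ k := by exact_mod_cast hk
  have hkM' : (k : ℝ) + 1 ≤ M := by exact_mod_cast hkM
  have hpiM : 0 ≤ π / M ∧ π / M ≤ π :=
    ⟨by positivity, div_le_self pi_pos.le hM⟩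
  have hmem : π * k / M ∈ Set.Icc (π / M) (π - π / M) := by
    constructor
    · gcongr; nlinarith [pi_pos]
    · rw [le_sub_iff_add_le, ← add_div, div_le_iff₀ (by linarith)]; nlinarith [pi_pos]
  have hmin := strictConcaveOn_sin_Icc.concaveOn.min_le_of_mem_Icc
    ⟨hpiM.1, hpiM.2⟩ ⟨by linarith, by linarith⟩ hmem
  rwa [sin_pi_sub, min_self] at hmin

namespace ZMod

variable {M : ℕ} [NeZero M]

theorem sum_norm_dft_sq (Φ : ZMod M → ℂ) : ∑ k, ‖𝓕 Φ k‖ ^ 2 = M * ∑ j, ‖Φ j‖ ^ 2 := by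
  have horth : ∀ i j : ZMod M, ∑ k, stdAddChar (-(i * k)) * stdAddChar (j * k)
      = if i = j then (M : ℂ) else 0 := by
    intro i j
    simp_rw [← AddChar.map_add_eq_mul, show ∀ k, -(i * k) + j * k = k * (j - i) by intro k; ring]
    rw [AddChar.sum_mulShift _ (isPrimitive_stdAddChar M)]
    simp [sub_eq_zero, eq_comm]
  apply Complex.ofReal_injective
  push_cast
  simp_rw [← Complex.mul_conj', dft_apply, smul_eq_mul, map_sum, map_mul,
    ← AddChar.map_neg_eq_conj, neg_neg, Finset.sum_mul, Finset.mul_sum]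
  rw [Finset.sum_comm]
  refine Finset.sum_congr rfl fun i _ => ?_
  rw [Finset.sum_comm]
  simp_rw [show ∀ j k, stdAddChar (-(i * k)) * Φ i * (stdAddChar (j * k) * (starRingEnd ℂ) (Φ j))
      = Φ i * (starRingEnd ℂ) (Φ j) * (stdAddChar (-(i * k)) * stdAddChar (j * k)) by
    intros; ring, ← Finset.mul_sum, horth]
  simp [mul_comm]

theorem dft_sub_comp_add_one (Φ : ZMod M → ℂ) (k : ZMod M) :
    𝓕 (fun x => Φ (x + 1) - Φ x) k = (stdAddChar k - 1) * 𝓕 Φ k := by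
  have hshift : 𝓕 (fun x => Φ (x + 1)) k = stdAddChar k * 𝓕 Φ k := by
    simp only [dft_apply, smul_eq_mul, Finset.mul_sum]
    rw [← (Equiv.subRight (1 : ZMod M)).sum_comp]
    refine Finset.sum_congr rfl fun j _ => ?_
    simp only [Equiv.subRight_apply, sub_add_cancel, ← mul_assoc, ← AddChar.map_add_eq_mul]
    ring_nf
  rw [show (fun x => Φ (x + 1) - Φ x) = (fun x => Φ (x + 1)) - Φ from rfl, map_sub,
    Pi.sub_apply, hshift]
  ring

theorem norm_stdAddChar_sub_one_sq (k : ZMod M) :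
    ‖stdAddChar k - 1‖ ^ 2 = 4 * sin (π * k.val / M) ^ 2 := by
  rw [stdAddChar_apply, toCircle_apply,
    show 2 * (π : ℂ) * Complex.I * k.val / M = Complex.I * ((2 * π * k.val / M : ℝ)) by
      push_cast; ring, Complex.norm_exp_I_mul_ofReal_sub_one, norm_mul, mul_pow, Real.norm_eq_abs,
    sq_abs, show 2 * π * k.val / M / 2 = π * k.val / M by ring]
  norm_num

theorem four_mul_sin_sq_le_norm_stdAddChar_sub_one_sq {k : ZMod M} (hk : k ≠ 0) :
    4 * sin (π / M) ^ 2 ≤ ‖stdAddChar k - 1‖ ^ 2 := by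
  rw [norm_stdAddChar_sub_one_sq]
  have hk0 : 0 < k.val := Nat.pos_of_ne_zero ((val_ne_zero k).2 hk)
  have hsin := sin_pi_div_le_sin_pi_mul_div hk0 k.val_lt
  have hsin0 : 0 ≤ sin (π / M) :=
    sin_nonneg_of_nonneg_of_le_pi (by positivity) (div_le_self pi_pos.le (by
      exact_mod_cast (NeZero.pos M)))
  gcongr

theorem four_mul_sin_sq_mul_sum_sq_le (a : ZMod M → ℝ) (ha : ∑ x, a x = 0) :
    4 * sin (π / M) ^ 2 * ∑ x, a x ^ 2 ≤ ∑ x, (a (x + 1) - a x) ^ 2 := by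
  set Φ : ZMod M → ℂ := fun x => a x
  have hΦ0 : 𝓕 Φ 0 = 0 := by simp only [dft_apply_zero, Φ]; exact_mod_cast ha
  have hmode : ∀ k, 4 * sin (π / M) ^ 2 * ‖𝓕 Φ k‖ ^ 2
      ≤ ‖𝓕 (fun x => Φ (x + 1) - Φ x) k‖ ^ 2 := by
    intro k
    rw [dft_sub_comp_add_one, norm_mul, mul_pow]
    rcases eq_or_ne k 0 with rfl | hk
    · simp [hΦ0]
    · gcongr
      exact four_mul_sin_sq_le_norm_stdAddChar_sub_one_sq hk
  have hsum := Finset.sum_le_sum fun k (_ : k ∈ univ) => hmode k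
  rw [← Finset.mul_sum, sum_norm_dft_sq, sum_norm_dft_sq] at hsum
  simp only [Φ, ← Complex.ofReal_sub, Complex.norm_real, Real.norm_eq_abs, sq_abs] at hsum
  have hM : (0 : ℝ) < M := by exact_mod_cast NeZero.pos M
  nlinarith

theorem sum_sq_add_comp_add_one (a : ZMod M → ℝ) :
    ∑ x, (a x + a (x + 1)) ^ 2 = 4 * ∑ x, a x ^ 2 - ∑ x, (a (x + 1) - a x) ^ 2 := by
  have hshift : ∑ x, a (x + 1) ^ 2 = ∑ x, a x ^ 2 := Equiv.sum_comp (Equiv.addRight 1) (a · ^ 2)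
  have hpt : ∀ x, (a x + a (x + 1)) ^ 2
      = 2 * a x ^ 2 + 2 * a (x + 1) ^ 2 - (a (x + 1) - a x) ^ 2 := fun x => by ring
  simp only [hpt, Finset.sum_sub_distrib, Finset.sum_add_distrib, ← Finset.mul_sum, hshift]
  ring

theorem sum_sq_sub_comp_add_one_of_recurrence {a : ZMod M → ℝ} {c : ℝ}
    (ha : ∀ x, a (x + 1) + a (x - 1) = 2 * c * a x) :
    ∑ x, (a (x + 1) - a x) ^ 2 = (2 - 2 * c) * ∑ x, a x ^ 2 := by
  have hshift : ∑ x, a (x + 1) ^ 2 = ∑ x, a x ^ 2 := Equiv.sum_comp (Equiv.addRight 1) (a · ^ 2)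
  have hprod : ∑ x, a x * a (x - 1) = ∑ x, a (x + 1) * a x := by
    rw [← Equiv.sum_comp (Equiv.addRight (1 : ZMod M))]
    simp
  have hrec : ∑ x, (a x * a (x + 1) + a x * a (x - 1)) = 2 * c * ∑ x, a x ^ 2 := by
    simp only [← mul_add, ha, Finset.mul_sum]
    exact Finset.sum_congr rfl fun x _ => by ring
  have hpt : ∀ x, (a (x + 1) - a x) ^ 2 = a (x + 1) ^ 2 + a x ^ 2 - 2 * (a x * a (x + 1)) :=
    fun x => by ring
  simp only [hpt, Finset.sum_sub_distrib, Finset.sum_add_distrib, ← Finset.mul_sum,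
    hshift] at hrec ⊢
  rw [hprod] at hrec
  simp only [mul_comm (a (_ + 1))] at hrec
  linarith

theorem exists_ne_zero_sum_eq_zero_recurrence (hM : 1 < M) :
    ∃ v : ZMod M → ℝ, v ≠ 0 ∧ ∑ x, v x = 0 ∧
      ∀ x, v (x + 1) + v (x - 1) = 2 * cos (2 * π / M) * v x := by
  have : Fact (1 < M) := ⟨hM⟩
  have hψ1 : stdAddChar (1 : ZMod M) + stdAddChar (-1 : ZMod M) = (2 * cos (2 * π / M) : ℝ) := by
    rw [AddChar.map_neg_eq_conj, Complex.add_conj, ← Int.cast_one, stdAddChar_coe,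
      show 2 * (π : ℂ) * Complex.I * ((1 : ℤ) : ℂ) / M = ((2 * π / M : ℝ) : ℂ) * Complex.I by
        push_cast; ring, Complex.exp_ofReal_mul_I_re]
  refine ⟨fun x => (stdAddChar x).re, fun h => ?_, ?_, fun x => ?_⟩
  · simpa using congr_fun h 0
  · rw [← Complex.re_sum, AddChar.sum_eq_zero_of_ne_one, Complex.zero_re]
    intro h
    have := DFunLike.congr_fun h (1 : ZMod M)
    rw [AddChar.one_apply, ← AddChar.map_zero_eq_one (stdAddChar (N := M)),
      injective_stdAddChar.eq_iff] at this
    exact one_ne_zero this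
  · rw [← Complex.add_re, sub_eq_add_neg, AddChar.map_add_eq_mul, AddChar.map_add_eq_mul,
      ← mul_add, hψ1, Complex.re_mul_ofReal]
    ring

end ZMod

theorem sum_idx_intCast {α : Type*} [AddCommMonoid α] (N : ℕ) [NeZero N] (g : ZMod (2 * N) → α) :
    ∑ ℓ ∈ idx N, g ℓ = ∑ x, g x := by
  have hinj : Set.InjOn (fun ℓ : ℤ => (ℓ : ZMod (2 * N))) (idx N) := by
    intro ℓ hℓ m hm h
    simp only [idx, coe_Icc, Set.mem_Icc] at hℓ hm
    have hdvd := (ZMod.intCast_eq_intCast_iff_dvd_sub ℓ m (2 * N)).1 h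
    have := Int.eq_zero_of_abs_lt_dvd hdvd (by rw [abs_lt]; push_cast; omega)
    omega
  have himage : (idx N).image (fun ℓ : ℤ => (ℓ : ZMod (2 * N))) = univ := by
    refine eq_univ_of_card _ ?_
    rw [card_image_of_injOn hinj, ZMod.card, idx, Int.card_Icc]
    omega
  rw [← sum_image hinj, himage]

theorem mem_uSet_iff (N : ℕ) [NeZero N] (u : ℤ → ℝ) :
    u ∈ uSet N ↔ ∃ v : ZMod (2 * N) → ℝ, ∑ x, v x = 0 ∧ ∀ ℓ : ℤ, u ℓ = v ℓ := by
  constructor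
  · rintro ⟨hper, hmean⟩
    have hv : ∀ ℓ : ℤ, u ℓ = u ((ℓ : ZMod (2 * N)).val : ℤ) := fun ℓ => by
      have hper' : Function.Periodic u ((2 * N : ℕ) : ℤ) := fun ℓ => by push_cast; exact hper ℓ
      have := hper'.int_mul (ℓ / (2 * N : ℕ)) (ℓ % (2 * N : ℕ))
      rw [Int.cast_id, Int.emod_add_ediv_mul] at this
      rw [ZMod.val_intCast, this]
    refine ⟨fun x => u x.val, ?_, hv⟩
    rw [← sum_idx_intCast, ← hmean]
    exact Finset.sum_congr rfl fun ℓ _ => (hv ℓ).symm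
  · rintro ⟨v, hv0, hv⟩
    refine ⟨fun ℓ => ?_, ?_⟩
    · have h2N : (2 * N : ZMod (2 * N)) = 0 := by exact_mod_cast ZMod.natCast_self (2 * N)
      rw [hv, hv]; push_cast; rw [h2N, add_zero]
    · simp only [hv, sum_idx_intCast, hv0]

theorem bD_mem_uSet {N : ℕ} [NeZero N] {u : ℤ → ℝ} (hu : u ∈ uSet N) : bD N u ∈ uSet N := by
  obtain ⟨v, hv0, hv⟩ := (mem_uSet_iff N u).1 hu
  refine (mem_uSet_iff N _).2 ⟨fun x => N * (v x - v (x - 1)), ?_, fun ℓ => ?_⟩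
  · have hshift : ∑ x, v (x - 1) = ∑ x, v x := Equiv.sum_comp (Equiv.subRight 1) v
    rw [← Finset.mul_sum, Finset.sum_sub_distrib, hshift, sub_self, mul_zero]
  · simp only [bD, hv, Int.cast_sub, Int.cast_one]

theorem eq_zero_of_bD_eq_zero {N : ℕ} [NeZero N] {u : ℤ → ℝ} (hu : u ∈ uSet N)
    (h : ∀ ℓ, bD N u ℓ = 0) : u = 0 := by
  have hstep : ∀ ℓ, u ℓ = u (ℓ - 1) := fun ℓ => by
    simpa [bD, sub_eq_zero, NeZero.ne N] using h ℓ
  have hconst : ∀ ℓ, u ℓ = u 0 := fun ℓ => by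
    induction ℓ using Int.induction_on with
    | zero => rfl
    | succ k ih => rw [hstep, add_sub_cancel_right, ih]
    | pred k ih => rw [← ih, hstep (-k), sub_eq_add_neg]
  have hmean := hu.2
  rw [Finset.sum_congr rfl fun ℓ _ => hconst ℓ, Finset.sum_const, idx, Int.card_Icc,
    nsmul_eq_mul, mul_eq_zero] at hmean
  funext ℓ
  rw [hconst, Pi.zero_apply]
  refine hmean.resolve_left ?_
  have := NeZero.ne N
  norm_cast
  omega

theorem sum_sq_pos_of_bD_eq {N : ℕ} [NeZero N] {u : ℤ → ℝ} (hu : u ∈ uSet N) (hu0 : u ≠ 0)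
    {a : ZMod (2 * N) → ℝ} (ha : ∀ ℓ : ℤ, bD N u ℓ = a ℓ) : 0 < ∑ x, a x ^ 2 := by
  refine (Finset.sum_nonneg fun x _ => sq_nonneg (a x)).lt_of_ne fun h =>
    hu0 (eq_zero_of_bD_eq_zero hu fun ℓ => ?_)
  rw [ha]
  exact pow_eq_zero_iff two_ne_zero |>.1 <|
    (Finset.sum_eq_zero_iff_of_nonneg fun x _ => sq_nonneg (a x)).1 h.symm _ (mem_univ _)

theorem d2E_self_eq_iteratedDeriv (E : (ℤ → ℝ) → ℝ) (y u : ℤ → ℝ) :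
    d2E E y u u = iteratedDeriv 2 (fun r : ℝ => E (y + r • u)) 0 := by
  have hinner : ∀ s : ℝ, deriv (fun t : ℝ => E (y + s • u + t • u)) 0
      = deriv (fun r : ℝ => E (y + r • u)) s := fun s => by
    have hshift := deriv_comp_add_const (f := fun r : ℝ => E (y + r • u)) (a := s) (x := 0)
    rw [zero_add] at hshift
    rw [← hshift]
    simp only [add_smul, add_assoc, add_comm (s • u)]
  simp only [d2E, hinner, iteratedDeriv_succ, iteratedDeriv_zero]

theorem iteratedDeriv_two_comp_add_mul (f : ℝ → ℝ) (x b r : ℝ) :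
    iteratedDeriv 2 (fun r => f (x + r * b)) r = b ^ 2 * iteratedDeriv 2 f (x + r * b) := by
  have hderiv : ∀ g : ℝ → ℝ, deriv (fun r => g (x + r * b)) = fun r => b * deriv g (x + r * b) :=
    fun g => funext fun r => by
      have h := deriv_comp_mul_left (f := fun z => g (x + z)) (c := b) (x := r)
      simp only [deriv_comp_const_add, smul_eq_mul] at h
      simpa only [mul_comm b] using h
  simp only [iteratedDeriv_succ, iteratedDeriv_zero, hderiv, deriv_const_mul_field']
  ring

theorem bD_yF_add_smul {N : ℕ} [NeZero N] (F r : ℝ) (u : ℤ → ℝ) (ℓ : ℤ) :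
    bD N (yF N F + r • u) ℓ = F + r * bD N u ℓ := by
  have := NeZero.ne (N : ℝ)
  simp only [bD, yF, Pi.add_apply, Pi.smul_apply, smul_eq_mul, Int.cast_sub, Int.cast_one]
  field_simp
  ring

theorem d2E_Ea_yF_eq_sum {N : ℕ} [NeZero N] {φ : ℝ → ℝ} (hφ : ContDiffOn ℝ 2 φ (Set.Ioi 0)) {F : ℝ}
    (hF : 0 < F) (u : ℤ → ℝ) :
    d2E (Ea N φ) (yF N F) u u = (N : ℝ)⁻¹ * ∑ ℓ ∈ idx N,
      (deriv (deriv φ) F * bD N u ℓ ^ 2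
        + deriv (deriv φ) (2 * F) * (bD N u ℓ + bD N u (ℓ + 1)) ^ 2) := by
  have hsmooth : ∀ {x : ℝ} (b : ℝ), 0 < x → ContDiffAt ℝ 2 (fun r => φ (x + r * b)) 0 :=
    fun b hx => by
      refine ContDiffAt.comp (g := φ) 0 ?_ (by fun_prop)
      simpa using hφ.contDiffAt (Ioi_mem_nhds hx)
  have hline : (fun r => Ea N φ (yF N F + r • u)) = fun r => (N : ℝ)⁻¹ * ∑ ℓ ∈ idx N,
      (φ (F + r * bD N u ℓ) + φ (2 * F + r * (bD N u ℓ + bD N u (ℓ + 1)))) := by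
    funext r
    simp only [Ea, bD_yF_add_smul]
    ring_nf
  rw [d2E_self_eq_iteratedDeriv, hline, iteratedDeriv_const_mul_field,
    iteratedDeriv_fun_sum fun ℓ _ => (hsmooth _ hF).add (hsmooth _ (by positivity))]
  congr 1
  refine Finset.sum_congr rfl fun ℓ _ => ?_
  rw [iteratedDeriv_fun_add (hsmooth _ hF) (hsmooth _ (by positivity)),
    iteratedDeriv_two_comp_add_mul, iteratedDeriv_two_comp_add_mul]
  simp only [zero_mul, add_zero, iteratedDeriv_succ, iteratedDeriv_zero]
  ring

theorem d2E_Ea_yF_eq_of_bD_eq {N : ℕ} [NeZero N] {φ : ℝ → ℝ} (hφ : ContDiffOn ℝ 2 φ (Set.Ioi 0))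
    {F : ℝ} (hF : 0 < F) {u : ℤ → ℝ} {a : ZMod (2 * N) → ℝ} (ha : ∀ ℓ : ℤ, bD N u ℓ = a ℓ) :
    d2E (Ea N φ) (yF N F) u u = (N : ℝ)⁻¹ *
      ((deriv (deriv φ) F + 4 * deriv (deriv φ) (2 * F)) * ∑ x, a x ^ 2
        - deriv (deriv φ) (2 * F) * ∑ x, (a (x + 1) - a x) ^ 2) := by
  rw [d2E_Ea_yF_eq_sum hφ hF]
  simp only [ha, Int.cast_add, Int.cast_one]
  rw [sum_idx_intCast N fun x => deriv (deriv φ) F * a x ^ 2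
      + deriv (deriv φ) (2 * F) * (a x + a (x + 1)) ^ 2,
    Finset.sum_add_distrib, ← Finset.mul_sum, ← Finset.mul_sum, ZMod.sum_sq_add_comp_add_one]
  ring

theorem two_sub_two_mul_cos_two_mul (θ : ℝ) : 2 - 2 * cos (2 * θ) = 4 * sin θ ^ 2 := by
  rw [cos_two_mul, cos_sq']
  ring

theorem exists_mem_uSet_ne_zero_sum_sq_sub_eq {N : ℕ} [NeZero N] (hN : 2 ≤ N) :
    ∃ u ∈ uSet N, u ≠ 0 ∧ ∃ a : ZMod (2 * N) → ℝ, (∀ ℓ : ℤ, bD N u ℓ = a ℓ) ∧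
      ∑ x, (a (x + 1) - a x) ^ 2 = 4 * sin (π / (2 * N : ℕ)) ^ 2 * ∑ x, a x ^ 2 := by
  obtain ⟨v, hv0, hvsum, hvrec⟩ :=
    ZMod.exists_ne_zero_sum_eq_zero_recurrence (M := 2 * N) (by omega)
  let a : ZMod (2 * N) → ℝ := fun x => N * (v x - v (x - 1))
  have harec : ∀ x, a (x + 1) + a (x - 1) = 2 * cos (2 * π / (2 * N : ℕ)) * a x := fun x => by
    have h1 := hvrec x
    have h2 := hvrec (x - 1)
    simp only [a, sub_add_cancel, add_sub_cancel_right] at h1 h2 ⊢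
    linear_combination (N : ℝ) * (h1 - h2)
  refine ⟨fun ℓ => v ℓ, (mem_uSet_iff N _).2 ⟨v, hvsum, fun _ => rfl⟩, fun h => hv0 ?_,
    a, fun ℓ => by simp [a, bD], ?_⟩
  · funext x
    obtain ⟨ℓ, rfl⟩ := ZMod.intCast_surjective x
    exact congr_fun h ℓ
  · rw [ZMod.sum_sq_sub_comp_add_one_of_recurrence harec, mul_div_assoc,
      two_sub_two_mul_cos_two_mul]

theorem inv_sq_mul_muEps_sq {N : ℕ} [NeZero N] :
    (N : ℝ)⁻¹ ^ 2 * muEps N ^ 2 = 4 * sin (π / (2 * N : ℕ)) ^ 2 := by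
  have := NeZero.ne (N : ℝ)
  rw [muEps, show π * (N : ℝ)⁻¹ / 2 = π / (2 * N : ℕ) by push_cast; field_simp]
  field_simp
  ring

theorem stmt3 (N : ℕ) (hN : 2 ≤ N) (φ : ℝ → ℝ)
    (hφ : ContDiffOn ℝ 2 φ (Set.Ioi 0)) (F : ℝ) (hF : 0 < F)
    (h2F : deriv (deriv φ) (2 * F) ≤ 0) :
    (∀ u ∈ uSet N, u ≠ 0 → 0 < d2E (Ea N φ) (yF N F) u u) ↔
      0 < deriv (deriv φ) F + 4 * deriv (deriv φ) (2 * F)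
          - (N : ℝ)⁻¹ ^ 2 * (muEps N) ^ 2 * deriv (deriv φ) (2 * F) := by
  have : NeZero N := ⟨by omega⟩
  rw [inv_sq_mul_muEps_sq]
  constructor
  · intro hstable
    obtain ⟨u, hu, hu0, a, ha, hextremal⟩ := exists_mem_uSet_ne_zero_sum_sq_sub_eq hN
    have hQ := hstable u hu hu0
    rw [d2E_Ea_yF_eq_of_bD_eq hφ hF ha, hextremal] at hQ
    refine pos_of_mul_pos_right (a := (N : ℝ)⁻¹ * ∑ x, a x ^ 2) ?_ (by positivity)
    linarith
  · intro hpos u hu hu0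
    obtain ⟨a, ha0, ha⟩ := (mem_uSet_iff N _).1 (bD_mem_uSet hu)
    have hwirtinger := ZMod.four_mul_sin_sq_mul_sum_sq_le a ha0
    rw [d2E_Ea_yF_eq_of_bD_eq hφ hF ha]
    refine mul_pos (by positivity) ?_
    nlinarith [mul_pos hpos (sum_sq_pos_of_bD_eq hu hu0 ha),
      mul_le_mul_of_nonpos_left hwirtinger h2F]
end
end

section
/- Let φ ∈ C¹((0,∞); ℝ) and F > 0. Then y_F is a critical point of the quasi-nonlocal QC energy: E_qnl'(y_F)[u] = 0 for every u ∈ 𝒰. -/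
open Finset Real

noncomputable section

/-!
At the homogeneous deformation every nearest-neighbour difference equals `F`, so each interaction
term of `E_qnl` linearizes to `φ'(F)` or `φ'(2F)` times a combination of the `u'_ℓ`. On the
continuum region `(φ(2u'_ℓ) + φ(2u'_{ℓ+1}))/2` linearizes exactly like `φ(u'_ℓ + u'_{ℓ+1})`, so
`E_qnl'(y_F)[u] = ε (φ'(F) Σ u'_ℓ + φ'(2F) Σ (u'_ℓ + u'_{ℓ+1}))`, and both sums telescope to zero
by periodicity of `u`.
-/

theorem sum_Icc_sub_pred {M : Type*} [AddCommGroup M] (f : ℤ → M) {a b : ℤ} (hab : a ≤ b) :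
    ∑ ℓ ∈ Icc a b, (f ℓ - f (ℓ - 1)) = f b - f (a - 1) := by
  induction b, hab using Int.leInduction with
  | base => simp
  | succ n hn ih =>
    rw [← insert_Icc_right_eq_Icc_add_one (by omega), sum_insert (by simp), ih, add_sub_cancel_right]
    abel

theorem sum_idx_bD_eq_zero {N : ℕ} {v : ℤ → ℝ} (hv : ∀ ℓ : ℤ, v (ℓ + 2 * (N : ℤ)) = v ℓ) :
    ∑ ℓ ∈ idx N, bD N v ℓ = 0 := by
  rcases Nat.eq_zero_or_pos N with rfl | hN
  · simp [idx]
  have hwrap : v (-(N : ℤ) + 1 - 1) = v N := by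
    rw [← hv, show -(N : ℤ) + 1 - 1 + 2 * N = N by ring]
  simp only [bD, ← mul_sum, idx, sum_Icc_sub_pred v (show -(N : ℤ) + 1 ≤ N by omega), hwrap,
    sub_self, mul_zero]

theorem sum_idx_bD_add_one_eq_zero {N : ℕ} {v : ℤ → ℝ}
    (hv : ∀ ℓ : ℤ, v (ℓ + 2 * (N : ℤ)) = v ℓ) :
    ∑ ℓ ∈ idx N, bD N v (ℓ + 1) = 0 := by
  have hshift : ∀ ℓ, bD N v (ℓ + 1) = bD N (fun k => v (k + 1)) ℓ := fun ℓ => by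
    simp only [bD, add_sub_cancel_right, sub_add_cancel]
  simp only [hshift]
  exact sum_idx_bD_eq_zero fun ℓ => by rw [add_right_comm, hv]

theorem bD_yF {N : ℕ} (hN : (N : ℝ) ≠ 0) (F : ℝ) (ℓ : ℤ) : bD N (yF N F) ℓ = F := by
  simp only [bD, yF, Int.cast_sub, Int.cast_one]
  field_simp
  ring

theorem hasDerivAt_bD_add_smul (N : ℕ) (y u : ℤ → ℝ) (ℓ : ℤ) (t : ℝ) :
    HasDerivAt (fun s : ℝ => bD N (y + s • u) ℓ) (bD N u ℓ) t := by
  have hlin : (fun s : ℝ => bD N (y + s • u) ℓ) = fun s => bD N y ℓ + s * bD N u ℓ := by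
    funext s
    simp only [bD, Pi.add_apply, Pi.smul_apply, smul_eq_mul]
    ring
  rw [hlin]
  simpa using ((hasDerivAt_id t).mul_const (bD N u ℓ)).const_add (bD N y ℓ)

theorem sum_qnl_linearization {ι : Type*} [DecidableEq ι] (A I : Finset ι) (hAI : A ⊆ I) (c : ℝ)
    (a b : ι → ℝ) :
    ∑ ℓ ∈ A, c * (a ℓ + b ℓ) + ∑ ℓ ∈ I \ A, (c * (2 * a ℓ) + c * (2 * b ℓ)) / 2
      = c * ∑ ℓ ∈ I, (a ℓ + b ℓ) := by
  rw [mul_sum, ← sum_sdiff hAI, add_comm]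
  congr 1
  exact sum_congr rfl fun ℓ _ => by ring

theorem hasDerivAt_Eqnl_of_bD_eq_const {N K : ℕ} (hK : aQnl K ⊆ idx N) {φ : ℝ → ℝ}
    {y : ℤ → ℝ} {F φ₁ φ₂ : ℝ} (hy : ∀ ℓ, bD N y ℓ = F) (h₁ : HasDerivAt φ φ₁ F)
    (h₂ : HasDerivAt φ φ₂ (2 * F)) (u : ℤ → ℝ) :
    HasDerivAt (fun t : ℝ => Eqnl N K φ (y + t • u))
      ((N : ℝ)⁻¹ * (φ₁ * ∑ ℓ ∈ idx N, bD N u ℓ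
        + φ₂ * ∑ ℓ ∈ idx N, (bD N u ℓ + bD N u (ℓ + 1)))) 0 := by
  have hD := hasDerivAt_bD_add_smul N y u
  have hy₀ : ∀ ℓ, bD N (y + (0 : ℝ) • u) ℓ = F := by simpa using hy
  have hpair : ∀ ℓ, HasDerivAt (fun t : ℝ => φ (bD N (y + t • u) ℓ + bD N (y + t • u) (ℓ + 1)))
      (φ₂ * (bD N u ℓ + bD N u (ℓ + 1))) 0 := fun ℓ => by
    have h₂' : HasDerivAt φ φ₂ (bD N (y + (0 : ℝ) • u) ℓ + bD N (y + (0 : ℝ) • u) (ℓ + 1)) := by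
      rwa [hy₀, hy₀, ← two_mul]
    exact h₂'.comp 0 ((hD ℓ 0).add (hD (ℓ + 1) 0))
  have hdouble : ∀ ℓ, HasDerivAt (fun t : ℝ => φ (2 * bD N (y + t • u) ℓ))
      (φ₂ * (2 * bD N u ℓ)) 0 := fun ℓ => by
    have h₂' : HasDerivAt φ φ₂ (2 * bD N (y + (0 : ℝ) • u) ℓ) := by rwa [hy₀]
    exact h₂'.comp 0 ((hD ℓ 0).const_mul 2)
  have hsingle : ∀ ℓ, HasDerivAt (fun t : ℝ => φ (bD N (y + t • u) ℓ)) (φ₁ * bD N u ℓ) 0 :=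
    fun ℓ => by
      have h₁' : HasDerivAt φ φ₁ (bD N (y + (0 : ℝ) • u) ℓ) := by rwa [hy₀]
      exact h₁'.comp 0 (hD ℓ 0)
  unfold Eqnl
  refine (((HasDerivAt.fun_sum fun ℓ _ => hsingle ℓ).add
    (HasDerivAt.fun_sum fun ℓ _ => hpair ℓ)).add
    (HasDerivAt.fun_sum fun ℓ _ => ((hdouble ℓ).add (hdouble (ℓ + 1))).div_const 2)).const_mul
    ((N : ℝ)⁻¹) |>.congr_deriv ?_
  rw [add_assoc, sum_qnl_linearization _ _ hK, ← mul_sum]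

theorem aQnl_subset_idx {N K : ℕ} (hK : K + 2 ≤ N) : aQnl K ⊆ idx N := by
  intro ℓ hℓ
  simp only [aQnl, idx, mem_Icc] at hℓ ⊢
  omega

theorem stmt6_general (N K : ℕ) (hK2 : K + 2 ≤ N)
    (φ : ℝ → ℝ) (hφ : ContDiffOn ℝ 1 φ (Set.Ioi 0)) (F : ℝ) (hF : 0 < F) :
    ∀ u ∈ uSet N, dE (Eqnl N K φ) (yF N F) u = 0 := by
  rintro u ⟨hper, -⟩
  have hφ' : ∀ p > 0, HasDerivAt φ (deriv φ p) p := fun p hp =>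
    ((hφ.differentiableOn one_ne_zero).differentiableAt (Ioi_mem_nhds hp)).hasDerivAt
  have hN : (N : ℝ) ≠ 0 := by norm_cast; omega
  have hE := hasDerivAt_Eqnl_of_bD_eq_const (aQnl_subset_idx hK2) (bD_yF hN F) (hφ' F hF)
    (hφ' (2 * F) (by positivity)) u
  rw [dE, hE.deriv, sum_add_distrib, sum_idx_bD_eq_zero hper, sum_idx_bD_add_one_eq_zero hper]
  ring

theorem stmt6 (N K : ℕ) (hN : 2 ≤ N) (hK1 : 1 ≤ K) (hK2 : K + 2 ≤ N)
    (φ : ℝ → ℝ) (hφ : ContDiffOn ℝ 1 φ (Set.Ioi 0)) (F : ℝ) (hF : 0 < F) :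
    ∀ u ∈ uSet N, dE (Eqnl N K φ) (yF N F) u = 0 :=
  stmt6_general N K hK2 φ hφ F hF
end
end
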